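/- Let H ∈ G_{n,i} for some i ∈ {1,…,n−1} and ◇ : 𝒦ⁿₙ → 𝒦ⁿ_H be a strictly monotonic, idempotent map which is invariant on H-symmetric spherical cylinders. Then ◇ is projection invariant: (◇K)|H = K|H for all convex bodies K. -/

import Mathlib

/-! Both inclusions are tested against half-spaces `⟪w, ·⟫ ≤ c` with `w ∈ H`: by Hahn–Banach,
these determine the projection onto `H` of a compact convex set. If `K` lies in such a half-space,
it lies in `H`-symmetric cylinders approximating the half-space arbitrarily well, so `◇K` does too,
by monotonicity and cylinder invariance. Conversely, if `◇K` lies in `⟪w, ·⟫ ≤ c` but some `k ∈ K`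
has `⟪w, k⟫ > t > c`, the image of the cap `K ∩ {t ≤ ⟪w, ·⟫}` lies in `◇K` by monotonicity and in
`{t ≤ ⟪w, ·⟫}` by the first part, which is impossible. -/

open Set MeasureTheory Metric Pointwise

noncomputable section

/-- Euclidean space `ℝⁿ`. -/
abbrev Euc (n : ℕ) := EuclideanSpace ℝ (Fin n)

/-- The orthogonal projection onto `H`, as a self-map `x ↦ x|H` of the ambient space. -/
def projS {n : ℕ} (H : Submodule ℝ (Euc n)) (x : Euc n) : Euc n :=
  (H.orthogonalProjection x : Euc n)

/-- The reflection with respect to the subspace `H` : `x ↦ 2(x|H) − x`. -/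
def reflS {n : ℕ} (H : Submodule ℝ (Euc n)) (x : Euc n) : Euc n :=
  (2 : ℝ) • projS H x - x

/-- `A` is symmetric with respect to the subspace `H`. -/
def SymmWrt {n : ℕ} (H : Submodule ℝ (Euc n)) (A : Set (Euc n)) : Prop :=
  reflS H '' A = A

/-- The orthogonal projection `A|H` of a set `A` onto `H`. -/
def pimg {n : ℕ} (H : Submodule ℝ (Euc n)) (A : Set (Euc n)) : Set (Euc n) :=
  projS H '' A

/-- The `H`-symmetric spherical cylinder `(r(B∩H)+x)+s(B∩H^⊥)`. -/
def cylSet {n : ℕ} (H : Submodule ℝ (Euc n)) (r s : ℝ) (x : Euc n) : Set (Euc n) :=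
  (fun y => x + y) '' (r • (closedBall (0 : Euc n) 1 ∩ (H : Set (Euc n)))
    + s • (closedBall (0 : Euc n) 1 ∩ ((Hᗮ : Submodule ℝ (Euc n)) : Set (Euc n))))

/-- Convex bodies of `ℝⁿ`: compact convex sets with nonempty interior. -/
abbrev FullBody (n : ℕ) := {K : ConvexBody (Euc n) // (interior (K : Set (Euc n))).Nonempty}

/-- `L` is a convex body in the subspace `H`: a compact convex subset of `H` with
nonempty interior relative to `H`. -/
def IsBodyIn {n : ℕ} (H : Submodule ℝ (Euc n)) (L : Set (Euc n)) : Prop :=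
  L ⊆ (H : Set (Euc n)) ∧ IsCompact L ∧ Convex ℝ L ∧
    (interior (((↑) : H → Euc n) ⁻¹' L)).Nonempty

/-- Sets of special form: `L + s(B ∩ H^⊥)` with `L` a convex body in `H` and `s > 0`. -/
def SpecialForm {n : ℕ} (H : Submodule ℝ (Euc n)) (T : Set (Euc n)) : Prop :=
  ∃ (L : Set (Euc n)) (s : ℝ), IsBodyIn H L ∧ 0 < s ∧
    T = L + s • (closedBall (0 : Euc n) 1 ∩ ((Hᗮ : Submodule ℝ (Euc n)) : Set (Euc n)))

open RealInnerProductSpace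

section Projection

variable {E : Type*} [NormedAddCommGroup E] [InnerProductSpace ℝ E]

lemma mem_smul_closedBall_inter_submodule (K : Submodule ℝ E) {r : ℝ} (hr : 0 < r) {z : E} :
    z ∈ r • (closedBall (0 : E) 1 ∩ K) ↔ ‖z‖ ≤ r ∧ z ∈ K := by
  rw [mem_smul_set_iff_inv_smul_mem₀ hr.ne', mem_inter_iff, mem_closedBall_zero_iff, norm_smul,
    norm_inv, Real.norm_of_nonneg hr.le, inv_mul_le_iff₀ hr, mul_one, SetLike.mem_coe,
    K.smul_mem_iff (inv_ne_zero hr.ne')]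

lemma starProjection_add_of_mem_orthogonal (K : Submodule ℝ E) [K.HasOrthogonalProjection]
    {p v : E} (hp : p ∈ K) (hv : v ∈ Kᗮ) : K.starProjection (p + v) = p :=
  K.eq_starProjection_of_mem_orthogonal' hp hv rfl

lemma inner_starProjection_right_of_mem (K : Submodule ℝ E) [K.HasOrthogonalProjection]
    {u : E} (hu : u ∈ K) (z : E) : ⟪u, K.starProjection z⟫ = ⟪u, z⟫ := by
  rw [← K.inner_starProjection_left_eq_right, K.starProjection_eq_self_iff.2 hu]

lemma halfSpace_smul (w : E) {a : ℝ} (ha : 0 < a) (c : ℝ) :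
    {z : E | ⟪a • w, z⟫ ≤ a * c} = {z | ⟪w, z⟫ ≤ c} := by
  ext z
  simp only [mem_ofPred_eq, real_inner_smul_left, mul_le_mul_iff_right₀ ha]

lemma starProjection_image_subset [CompleteSpace E] (K : Submodule ℝ E) [K.HasOrthogonalProjection]
    {S T : Set E} (hT : IsCompact T) (hTc : Convex ℝ T)
    (h : ∀ w ∈ K, ∀ c : ℝ, T ⊆ {z | ⟪w, z⟫ ≤ c} → S ⊆ {z | ⟪w, z⟫ ≤ c}) :
    K.starProjection '' S ⊆ K.starProjection '' T := by
  rintro - ⟨y, hyS, rfl⟩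
  by_contra hy
  obtain ⟨f, c, hfT, hfy⟩ := geometric_hahn_banach_closed_point
    (hTc.linear_image K.starProjection.toLinearMap)
    (hT.image K.starProjection.continuous).isClosed hy
  set v := (InnerProductSpace.toDual ℝ E).symm f
  have hv : ∀ z, ⟪K.starProjection v, z⟫ = f (K.starProjection z) := fun z => by
    rw [K.inner_starProjection_left_eq_right, InnerProductSpace.toDual_symm_apply]
  have hTv : T ⊆ {z | ⟪K.starProjection v, z⟫ ≤ c} := fun z hz => by
    rw [mem_ofPred_eq, hv]
    exact (hfT _ ⟨z, hz, rfl⟩).le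
  have hyv := h _ (K.starProjection_apply_mem v) c hTv hyS
  rw [mem_ofPred_eq, hv] at hyv
  exact hfy.not_ge hyv

end Projection

lemma Convex.interior_inter_nonempty_of_isOpen {E : Type*} [AddCommGroup E] [Module ℝ E]
    [TopologicalSpace E] [IsTopologicalAddGroup E] [ContinuousSMul ℝ E] {s U : Set E}
    (hs : Convex ℝ s) (hint : (interior s).Nonempty) (hU : IsOpen U) (hsU : (s ∩ U).Nonempty) :
    (interior s ∩ U).Nonempty := by
  obtain ⟨k, hks, hkU⟩ := hsU
  have hk : k ∈ closure (interior s) := by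
    rw [hs.closure_interior_eq_closure_of_nonempty_interior hint]
    exact subset_closure hks
  exact inter_comm U _ ▸ mem_closure_iff.1 hk U hU hkU

variable {n : ℕ} {H : Submodule ℝ (Euc n)}

lemma projS_eq_starProjection : projS H = H.starProjection := rfl

section Cylinder

variable {r s : ℝ} {x y : Euc n}

lemma mem_cylSet_iff (hr : 0 < r) (hs : 0 < s) :
    y ∈ cylSet H r s x ↔ ‖H.starProjection (y - x)‖ ≤ r ∧ ‖Hᗮ.starProjection (y - x)‖ ≤ s := by
  simp only [cylSet, image_add_left, mem_preimage, mem_add,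
    mem_smul_closedBall_inter_submodule _ hr, mem_smul_closedBall_inter_submodule _ hs]
  constructor
  · rintro ⟨p, ⟨hpr, hp⟩, v, ⟨hvs, hv⟩, hpv⟩
    rw [neg_add_eq_sub] at hpv
    rw [← hpv, starProjection_add_of_mem_orthogonal H hp hv, add_comm,
      starProjection_add_of_mem_orthogonal Hᗮ hv (H.le_orthogonal_orthogonal hp)]
    exact ⟨hpr, hvs⟩
  · rintro ⟨hp, hv⟩
    refine ⟨_, ⟨hp, H.starProjection_apply_mem _⟩, _, ⟨hv, Hᗮ.starProjection_apply_mem _⟩, ?_⟩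
    rw [H.starProjection_add_starProjection_orthogonal, neg_add_eq_sub]

lemma isCompact_cylSet (r s : ℝ) (x : Euc n) : IsCompact (cylSet H r s x) := by
  have hB : ∀ K : Submodule ℝ (Euc n), IsCompact (closedBall (0 : Euc n) 1 ∩ K) := fun K =>
    (isCompact_closedBall _ _).inter_right K.closed_of_finiteDimensional
  exact (((hB H).smul r).add ((hB Hᗮ).smul s)).image (continuous_const_add x)

lemma convex_cylSet (r s : ℝ) (x : Euc n) : Convex ℝ (cylSet H r s x) :=
  ((((convex_closedBall _ _).inter H.convex).smul r).add
    (((convex_closedBall _ _).inter Hᗮ.convex).smul s)).translate x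

lemma ball_subset_cylSet (hr : 0 < r) (hs : 0 < s) : ball x (min r s) ⊆ cylSet H r s x := by
  intro y hy
  rw [mem_ball, dist_eq_norm] at hy
  rw [mem_cylSet_iff hr hs]
  exact ⟨(Submodule.norm_starProjection_apply_le _ _).trans (hy.le.trans (min_le_left _ _)),
    (Submodule.norm_starProjection_apply_le _ _).trans (hy.le.trans (min_le_right _ _))⟩

variable (H) in
def cylBody (hr : 0 < r) (hs : 0 < s) (x : Euc n) : FullBody n :=
  ⟨⟨cylSet H r s x, convex_cylSet r s x, isCompact_cylSet r s x,
      ⟨x, ball_subset_cylSet hr hs (mem_ball_self (lt_min hr hs))⟩⟩,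
    ⟨x, interior_maximal (ball_subset_cylSet hr hs) isOpen_ball (mem_ball_self (lt_min hr hs))⟩⟩

lemma inner_le_of_mem_cylSet {u : Euc n} (hu : u ∈ H) (hu1 : ‖u‖ = 1) (hr : 0 < r) (hs : 0 < s)
    (hy : y ∈ cylSet H r s x) : ⟪u, y⟫ ≤ ⟪u, x⟫ + r := by
  have hyx : ⟪u, y - x⟫ ≤ r := by
    rw [← inner_starProjection_right_of_mem H hu]
    calc ⟪u, H.starProjection (y - x)⟫ ≤ ‖u‖ * ‖H.starProjection (y - x)‖ := real_inner_le_norm _ _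
      _ ≤ r := by rw [hu1, one_mul]; exact ((mem_cylSet_iff hr hs).1 hy).1
  rw [inner_sub_right] at hyx
  linarith

/-- The cylinder is centred at `-ρ • u` for a huge `ρ`; near `X`, its ball of radius `ρ + c + δ`
in `H` is close to the half-space `⟪u, ·⟫ ≤ c + δ`. -/
lemma exists_cylSet_between {X : Set (Euc n)} (hX : Bornology.IsBounded X) {u : Euc n}
    (hu : u ∈ H) (hu1 : ‖u‖ = 1) {c δ : ℝ} (hδ : 0 < δ) (hXc : X ⊆ {z | ⟪u, z⟫ ≤ c}) :
    ∃ r s x, 0 < r ∧ 0 < s ∧ x ∈ H ∧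
      X ⊆ cylSet H r s x ∧ cylSet H r s x ⊆ {z | ⟪u, z⟫ ≤ c + δ} := by
  obtain ⟨R, hR, hXR⟩ := hX.exists_pos_norm_le
  set ρ := R + |c| + R ^ 2 / (2 * δ)
  have hρ : R ^ 2 ≤ 2 * ρ * δ := by
    have : R ^ 2 / (2 * δ) * (2 * δ) = R ^ 2 := div_mul_cancel₀ _ (by positivity)
    nlinarith [abs_nonneg c]
  have hr : 0 < ρ + c + δ := by
    have : 0 ≤ R ^ 2 / (2 * δ) := by positivity
    linarith [neg_abs_le c]
  have huu : H.starProjection u = u := H.starProjection_eq_self_iff.2 hu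
  refine ⟨ρ + c + δ, R, -ρ • u, hr, hR, H.smul_mem _ hu, fun z hz => ?_, fun y hy => ?_⟩
  · have hP : H.starProjection (z - -ρ • u) = H.starProjection z + ρ • u := by
      rw [map_sub, map_smul, huu]; module
    have hQ : Hᗮ.starProjection (z - -ρ • u) = Hᗮ.starProjection z := by
      rw [map_sub, Hᗮ.starProjection_apply_eq_zero_iff.2
        (H.le_orthogonal_orthogonal (H.smul_mem _ hu)), sub_zero]
    rw [mem_cylSet_iff hr hR, hP, hQ]
    refine ⟨(pow_le_pow_iff_left₀ (norm_nonneg _) hr.le two_ne_zero).1 ?_,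
      (Submodule.norm_starProjection_apply_le _ _).trans (hXR z hz)⟩
    have hPz : ‖H.starProjection z‖ ≤ R :=
      (Submodule.norm_starProjection_apply_le _ _).trans (hXR z hz)
    calc ‖H.starProjection z + ρ • u‖ ^ 2
        = ‖H.starProjection z‖ ^ 2 + 2 * ρ * ⟪u, z⟫ + ρ ^ 2 := by
          rw [norm_add_sq_real, real_inner_smul_right, norm_smul, hu1, real_inner_comm,
            inner_starProjection_right_of_mem H hu, Real.norm_of_nonneg (by positivity)]
          ring
      _ ≤ R ^ 2 + 2 * ρ * c + ρ ^ 2 := by gcongr; exact hXc hz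
      _ ≤ (ρ + c + δ) ^ 2 := by nlinarith [sq_nonneg (c + δ)]
  · have := inner_le_of_mem_cylSet hu hu1 hr hR hy
    rw [real_inner_smul_right, real_inner_self_eq_norm_sq, hu1] at this
    simp only [mem_ofPred_eq]
    linarith

end Cylinder

lemma FullBody.interior_inter_halfSpace_nonempty (K : FullBody n) {w : Euc n} {t : ℝ}
    (hK : ∃ k ∈ (K.1 : Set (Euc n)), t < ⟪w, k⟫) :
    (interior ((K.1 : Set (Euc n)) ∩ {z | t ≤ ⟪w, z⟫})).Nonempty := by
  have hU : IsOpen {z : Euc n | t < ⟪w, z⟫} :=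
    isOpen_lt continuous_const (continuous_const.inner continuous_id)
  obtain ⟨z, hzK, hzt⟩ := K.1.convex.interior_inter_nonempty_of_isOpen K.2 hU hK
  have hsub : interior (K.1 : Set (Euc n)) ∩ {z | t < ⟪w, z⟫} ⊆ K.1 ∩ {z | t ≤ ⟪w, z⟫} :=
    inter_subset_inter interior_subset (ofPred_subset_ofPred.2 fun _ => le_of_lt)
  exact ⟨z, interior_maximal hsub (isOpen_interior.inter hU) ⟨hzK, hzt⟩⟩

def capBody (K : FullBody n) (w : Euc n) (t : ℝ) (hK : ∃ k ∈ (K.1 : Set (Euc n)), t < ⟪w, k⟫) :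
    FullBody n :=
  ⟨⟨K.1 ∩ {z | t ≤ ⟪w, z⟫}, K.1.convex.inter (convex_halfSpace_ge (innerₛₗ ℝ w).isLinear t),
      K.1.isCompact.inter_right (isClosed_le continuous_const (innerSL ℝ w).continuous),
      let ⟨k, hk, hkt⟩ := hK; ⟨k, hk, hkt.le⟩⟩,
    K.interior_inter_halfSpace_nonempty hK⟩

section BodyMap

variable (H) in
def CylinderInvariant (dia : FullBody n → ConvexBody (Euc n)) : Prop :=
  ∀ (C : FullBody n) (r s : ℝ) (x : Euc n), 0 < r → 0 < s → x ∈ H →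
    (C.1 : Set (Euc n)) = cylSet H r s x → (dia C : Set (Euc n)) = (C.1 : Set (Euc n))

variable {dia : FullBody n → ConvexBody (Euc n)}

lemma dia_subset_halfSpace_of_norm_eq_one (hmono : Monotone dia) (hcyl : CylinderInvariant H dia)
    (X : FullBody n) {u : Euc n} (hu : u ∈ H) (hu1 : ‖u‖ = 1) {c : ℝ}
    (hX : (X.1 : Set (Euc n)) ⊆ {z | ⟪u, z⟫ ≤ c}) : (dia X : Set (Euc n)) ⊆ {z | ⟪u, z⟫ ≤ c} := by
  intro y hy
  refine show ⟪u, y⟫ ≤ c from le_of_forall_pos_le_add fun δ hδ => ?_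
  obtain ⟨r, s, x, hr, hs, hx, hXC, hCc⟩ :=
    exists_cylSet_between X.1.isCompact.isBounded hu hu1 hδ hX
  have hdiaC := hcyl (cylBody H hr hs x) r s x hr hs hx rfl
  have hXC' : (dia X : Set (Euc n)) ⊆ dia (cylBody H hr hs x) := hmono (show X ≤ _ from hXC)
  rw [hdiaC] at hXC'
  exact hCc (hXC' hy)

lemma dia_subset_halfSpace (hmono : Monotone dia) (hcyl : CylinderInvariant H dia)
    (X : FullBody n) {w : Euc n} (hw : w ∈ H) {c : ℝ}
    (hX : (X.1 : Set (Euc n)) ⊆ {z | ⟪w, z⟫ ≤ c}) : (dia X : Set (Euc n)) ⊆ {z | ⟪w, z⟫ ≤ c} := by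
  rcases eq_or_ne w 0 with rfl | hw0
  · obtain ⟨z, hz⟩ := X.1.nonempty
    have hc : 0 ≤ c := by simpa using hX hz
    intro y _
    simpa using hc
  · have hnw : 0 < ‖w‖⁻¹ := inv_pos.2 (norm_pos_iff.2 hw0)
    rw [← halfSpace_smul w hnw] at hX ⊢
    exact dia_subset_halfSpace_of_norm_eq_one hmono hcyl X (H.smul_mem _ hw)
      (norm_smul_inv_norm hw0) hX

lemma subset_halfSpace_of_dia_subset (hmono : Monotone dia) (hcyl : CylinderInvariant H dia)
    (K : FullBody n) {w : Euc n} (hw : w ∈ H) {c : ℝ}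
    (hK : (dia K : Set (Euc n)) ⊆ {z | ⟪w, z⟫ ≤ c}) : (K.1 : Set (Euc n)) ⊆ {z | ⟪w, z⟫ ≤ c} := by
  intro k hk
  by_contra hkc
  rw [mem_ofPred_eq, not_le] at hkc
  obtain ⟨t, hct, htk⟩ := exists_between hkc
  set C := capBody K w t ⟨k, hk, htk⟩
  have hC : (C.1 : Set (Euc n)) = (K.1 : Set (Euc n)) ∩ {z | t ≤ ⟪w, z⟫} := rfl
  have hCt : (dia C : Set (Euc n)) ⊆ {z | ⟪-w, z⟫ ≤ -t} :=
    dia_subset_halfSpace hmono hcyl C (H.neg_mem hw) fun z hz => by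
      rw [mem_ofPred_eq, inner_neg_left, neg_le_neg_iff]; exact (hC ▸ hz).2
  obtain ⟨y, hy⟩ := (dia C).nonempty
  have h₁ : t ≤ ⟪w, y⟫ := by simpa [inner_neg_left] using hCt hy
  have hCK : C ≤ K := show (C.1 : Set (Euc n)) ⊆ K.1 from hC ▸ inter_subset_left
  have h₂ : ⟪w, y⟫ ≤ c := hK (hmono hCK hy)
  linarith

end BodyMap

theorem stmt8_general {n : ℕ}
    (H : Submodule ℝ (Euc n))
    (dia : FullBody n → ConvexBody (Euc n))
    (hmono : ∀ K L : FullBody n,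
      (K.1 : Set (Euc n)) ⊂ (L.1 : Set (Euc n)) → (dia K : Set (Euc n)) ⊂ (dia L : Set (Euc n)))
    (hcyl : ∀ (C : FullBody n) (r s : ℝ) (x : Euc n), 0 < r → 0 < s → x ∈ H →
      (C.1 : Set (Euc n)) = cylSet H r s x → (dia C : Set (Euc n)) = (C.1 : Set (Euc n))) :
    ∀ K : FullBody n, pimg H (dia K : Set (Euc n)) = pimg H (K.1 : Set (Euc n)) := by
  have hmono' : Monotone dia := StrictMono.monotone hmono
  intro K
  rw [pimg, pimg, projS_eq_starProjection]
  exact Subset.antisymm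
    (starProjection_image_subset H K.1.isCompact K.1.convex fun w hw c =>
      dia_subset_halfSpace hmono' hcyl K hw)
    (starProjection_image_subset H (dia K).isCompact (dia K).convex fun w hw c =>
      subset_halfSpace_of_dia_subset hmono' hcyl K hw)

/-- Theorem 1, case of bodies: if `H ∈ G_{n,i}` with `1 ≤ i ≤ n−1` and
`◇ : 𝒦ⁿₙ → 𝒦ⁿ_H` is strictly monotonic, idempotent and invariant on `H`-symmetric
spherical cylinders, then `◇` is projection invariant. -/
theorem stmt8 {n i : ℕ} (hi1 : 1 ≤ i) (hin : i ≤ n - 1)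
    (H : Submodule ℝ (Euc n)) (hHr : Module.finrank ℝ H = i)
    (dia : FullBody n → ConvexBody (Euc n))
    (hcod : ∀ K, SymmWrt H (dia K : Set (Euc n)))
    (hmono : ∀ K L : FullBody n,
      (K.1 : Set (Euc n)) ⊂ (L.1 : Set (Euc n)) → (dia K : Set (Euc n)) ⊂ (dia L : Set (Euc n)))
    (hidem : ∀ (K : FullBody n) (h : (interior (dia K : Set (Euc n))).Nonempty),
      dia ⟨dia K, h⟩ = dia K)
    (hcyl : ∀ (C : FullBody n) (r s : ℝ) (x : Euc n), 0 < r → 0 < s → x ∈ H →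
      (C.1 : Set (Euc n)) = cylSet H r s x → (dia C : Set (Euc n)) = (C.1 : Set (Euc n))) :
    ∀ K : FullBody n, pimg H (dia K : Set (Euc n)) = pimg H (K.1 : Set (Euc n)) :=
  stmt8_general H dia hmono hcyl
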